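/- For every k with 1 ≤ k ≤ n, the following identity (relation R_k) holds in F_q[x_1,…,x_n,y_1,…,y_n]: Σ_{i=0}^{k−1} Σ_{j=0}^{n−k} (−1)^{i+j+n+1} c_{k−1,i} · c*_{n−k,j} · u_{i−j}^{q^{min(i,j)}} = f_k · f*_{n+1−k}. -/

import Mathlib

open MvPolynomial

variable (F : Type) [Field F] [Fintype F] (n : ℕ)

/-- `fX F n k` is the orbit product `f_k` (1-indexed, meaningful for `1 ≤ k ≤ n`). -/
noncomputable def fX (k : ℕ) : MvPolynomial (Fin n ⊕ Fin n) F :=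
  if h : 1 ≤ k ∧ k ≤ n then
    ∏ α : Fin (k - 1) → F,
      (X (Sum.inl ⟨k - 1, by omega⟩) +
        ∑ j : Fin (k - 1), C (α j) * X (Sum.inl ⟨j.val, by omega⟩))
  else 0

/-- `fY F n k` is `f_k^*` (1-indexed), the orbit product of `y_{n+1-k}`. -/
noncomputable def fY (k : ℕ) : MvPolynomial (Fin n ⊕ Fin n) F :=
  if h : 1 ≤ k ∧ k ≤ n then
    ∏ α : Fin (k - 1) → F,
      (X (Sum.inr ⟨n - k, by omega⟩) +
        ∑ j : Fin (k - 1), C (α j) * X (Sum.inr ⟨n - 1 - j.val, by omega⟩))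
  else 0

/-- `uInv F n j` is the invariant `u_j`, for `j : ℤ`. -/
noncomputable def uInv (j : ℤ) : MvPolynomial (Fin n ⊕ Fin n) F :=
  if 0 ≤ j then ∑ k : Fin n, X (Sum.inl k) ^ (Fintype.card F) ^ j.toNat * X (Sum.inr k)
  else ∑ k : Fin n, X (Sum.inl k) * X (Sum.inr k) ^ (Fintype.card F) ^ (-j).toNat

/-- `cX F n s t` is the Dickson-type invariant `c_{s,t}` (in the `x`-variables):
the sum over strictly increasing sequences `1 ≤ j_1 < ⋯ < j_{s-t} ≤ s` (encoded as
strictly monotone functions `Fin (s-t) → Fin s`) of `∏_l f_{j_l}^{(q-1)·q^{t+l-j_l}}`. -/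
noncomputable def cX (s t : ℕ) : MvPolynomial (Fin n ⊕ Fin n) F :=
  if s ≤ n then
    ∑ g ∈ Finset.univ.filter (fun g : Fin (s - t) → Fin s => ∀ a b : Fin (s - t), a < b → g a < g b),
      ∏ l : Fin (s - t),
        fX F n ((g l).val + 1) ^ ((Fintype.card F - 1) * (Fintype.card F) ^ (t + l.val - (g l).val))
  else 0

/-- `cY F n s t` is `c_{s,t}^*` (in the `y`-variables). -/
noncomputable def cY (s t : ℕ) : MvPolynomial (Fin n ⊕ Fin n) F :=
  if s ≤ n then
    ∑ g ∈ Finset.univ.filter (fun g : Fin (s - t) → Fin s => ∀ a b : Fin (s - t), a < b → g a < g b),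
      ∏ l : Fin (s - t),
        fY F n ((g l).val + 1) ^ ((Fintype.card F - 1) * (Fintype.card F) ^ (t + l.val - (g l).val))
  else 0

open Finset

/-!
Let `P_s(z) = ∏_{w ∈ W_s} (z + w)`, where `W_s` is the `𝔽_q`-span of `v_0, …, v_{s-1}` in
an `𝔽_q`-algebra, and `f_i = P_{i-1}(v_{i-1})`. If `P_s` is `𝔽_q`-linear, writing
`W_{s+1} = W_s + 𝔽_q v_s` and using `∏_β (a + β b) = a^q - b^(q-1) a` gives
`P_{s+1}(z) = P_s(z)^q - f_{s+1}^(q-1) P_s(z)`. Sorting the increasing sequences in `c_{s+1,t+1}`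
by whether they end at `s + 1` gives `c_{s+1,t+1} = c_{s,t}^q + f_{s+1}^(q-1) c_{s,t+1}`, so by
induction `P_s(z) = ∑_t (-1)^(s+t) c_{s,t} z^(q^t)`, which is indeed linear.

Take `v = (x_1, …, x_n)` and `v = (y_n, …, y_1)`. As
`u_{i-j}^(q^min(i,j)) = ∑_l x_l^(q^i) y_l^(q^j)`, the left side of `R_k` is
`∑_l P_{k-1}(x_l) P*_{n-k}(y_l)`. The first factor vanishes for `l < k`, the second for `l > k`,
and the term `l = k` is `f_k f*_{n+1-k}`.
-/

namespace FiniteField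

variable {K R : Type*} [Field K] [Fintype K] [CommRing R] [Algebra K R]

local notation "q" => Fintype.card K

theorem frobeniusAlgHom_pow_apply (m : ℕ) (x : R) : (frobeniusAlgHom K R ^ m) x = x ^ q ^ m := by
  rw [AlgHom.coe_pow, coe_frobeniusAlgHom, pow_iterate]

variable (K) in
theorem sum_pow_card_pow {ι : Type*} (m : ℕ) (s : Finset ι) (f : ι → R) :
    (∑ i ∈ s, f i) ^ q ^ m = ∑ i ∈ s, f i ^ q ^ m := by
  simpa only [frobeniusAlgHom_pow_apply] using map_sum (frobeniusAlgHom K R ^ m) f s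

theorem add_smul_pow_card_pow (m : ℕ) (z : R) (β : K) (w : R) :
    (z + β • w) ^ q ^ m = z ^ q ^ m + β • w ^ q ^ m := by
  simpa only [frobeniusAlgHom_pow_apply, map_smul] using
    map_add (frobeniusAlgHom K R ^ m) z (β • w)

variable (K) in
theorem neg_one_pow_pow_card (a : ℕ) : ((-1 : R) ^ a) ^ q = (-1) ^ a := by
  have h : (-1 : R) ^ q = -1 := by simpa using map_neg (frobeniusAlgHom K R) 1
  rw [← pow_mul, mul_comm, pow_mul, h]

open Polynomial in
theorem prod_X_add_C_eq_X_pow_card_sub_X :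
    ∏ β : K, (Polynomial.X + Polynomial.C β) = Polynomial.X ^ q - Polynomial.X := by
  have hmonic : (Polynomial.X ^ q - Polynomial.X : K[X]).Monic :=
    monic_X_pow_sub (by rw [Polynomial.degree_X]; exact_mod_cast Fintype.one_lt_card)
  have h := prod_multiset_X_sub_C_of_monic_of_roots_card_eq hmonic
    (by rw [roots_X_pow_card_sub_X, X_pow_card_sub_X_natDegree_eq K Fintype.one_lt_card]; rfl)
  rw [roots_X_pow_card_sub_X] at h
  rw [← h]
  exact Fintype.prod_equiv (Equiv.neg K) _ _ (fun β => by simp [sub_eq_add_neg])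

theorem prod_add_smul (z c : R) : ∏ β : K, (z + β • c) = z ^ q - c ^ (q - 1) * z := by
  have h := congrArg
    (fun p => MvPolynomial.aeval ![z, c] (Polynomial.homogenize p (∑ _β : K, 1)))
    (prod_X_add_C_eq_X_pow_card_sub_X (K := K))
  have hq : q ≠ 0 := Fintype.card_ne_zero
  simp only [Polynomial.homogenize_finsetProd (fun _ _ => (Polynomial.natDegree_X_add_C _).le)] at h
  simpa [Polynomial.homogenize_X_pow, Polynomial.homogenize_X hq, Algebra.smul_def, mul_comm]
    using h

end FiniteField

theorem StrictMono.fin_val_add_le {m s : ℕ} {g : Fin m → Fin s} (hg : StrictMono g)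
    (l : Fin m) :
    (g l : ℕ) + m ≤ s + l := by
  have h := card_le_card_of_injOn g (s := Ioi l) (t := Ioi (g l))
    (fun a ha => by simpa using hg (by simpa using ha)) hg.injective.injOn
  simp only [Fin.card_Ioi] at h
  omega

theorem strictMono_snoc_castSucc {m s : ℕ} {g : Fin m → Fin s} (hg : StrictMono g) :
    StrictMono (Fin.snoc (Fin.castSucc ∘ g) (Fin.last s) : Fin (m + 1) → Fin (s + 1)) := by
  intro a b hab
  induction b using Fin.lastCases with
  | last =>
    induction a using Fin.lastCases with
    | last => exact absurd hab (lt_irrefl _)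
    | cast a => simp [Fin.castSucc_lt_last]
  | cast b =>
    induction a using Fin.lastCases with
    | last => exact absurd hab (not_lt.2 (Fin.le_last _))
    | cast a => simpa using hg (Fin.castSucc_lt_castSucc_iff.1 hab)

theorem sum_strictMono_of_last_eq {M : Type*} [AddCommMonoid M] (m s : ℕ)
    (W : (Fin (m + 1) → Fin (s + 1)) → M) :
    ∑ g ∈ (univ.filter StrictMono).filter (fun g => g (Fin.last m) = Fin.last s), W g
      = ∑ g ∈ univ.filter (StrictMono : (Fin m → Fin s) → Prop),
          W (Fin.snoc (Fin.castSucc ∘ g) (Fin.last s)) := by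
  refine (sum_nbij (fun g : Fin m → Fin s =>
    (Fin.snoc (Fin.castSucc ∘ g) (Fin.last s) : Fin (m + 1) → Fin (s + 1)))
    ?_ ?_ ?_ (fun _ _ => rfl)).symm
  · intro g hg
    simp only [mem_filter, mem_univ, true_and, Fin.snoc_last, and_true] at hg ⊢
    exact strictMono_snoc_castSucc hg
  · intro g₁ _ g₂ _ h
    exact (Fin.castSucc_injective _).comp_left (by simpa using congrArg Fin.init h)
  · intro G hG
    simp only [mem_coe, mem_filter, mem_univ, true_and] at hG
    have hlt (l : Fin m) : G l.castSucc ≠ Fin.last s :=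
      hG.2 ▸ (hG.1 (Fin.castSucc_lt_last l)).ne
    refine ⟨fun l => (G l.castSucc).castPred (hlt l), ?_, ?_⟩
    · simp only [mem_coe, mem_filter, mem_univ, true_and]
      exact fun a b hab => by simpa [Fin.castPred_lt_castPred_iff] using hG.1 hab
    · ext l
      induction l using Fin.lastCases <;> simp [hG.2]

theorem sum_strictMono_of_last_ne {M : Type*} [AddCommMonoid M] (m s : ℕ)
    (W : (Fin (m + 1) → Fin (s + 1)) → M) :
    ∑ g ∈ (univ.filter StrictMono).filter (fun g => ¬g (Fin.last m) = Fin.last s), W g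
      = ∑ g ∈ univ.filter (StrictMono : (Fin (m + 1) → Fin s) → Prop),
          W (Fin.castSucc ∘ g) := by
  refine (sum_nbij (Fin.castSucc ∘ ·) ?_ ?_ ?_ (fun _ _ => rfl)).symm
  · intro g hg
    simp only [mem_filter, mem_univ, true_and] at hg ⊢
    exact ⟨Fin.strictMono_castSucc.comp hg, Fin.castSucc_ne_last _⟩
  · intro g₁ _ g₂ _ h
    exact (Fin.castSucc_injective _).comp_left h
  · intro G hG
    simp only [mem_coe, mem_filter, mem_univ, true_and] at hG
    have hlt (l : Fin (m + 1)) : G l ≠ Fin.last s :=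
      ((hG.1.monotone (Fin.le_last l)).trans_lt (Fin.lt_last_iff_ne_last.2 hG.2)).ne
    refine ⟨fun l => (G l).castPred (hlt l), ?_, ?_⟩
    · simp only [mem_coe, mem_filter, mem_univ, true_and]
      exact fun a b hab => by simpa [Fin.castPred_lt_castPred_iff] using hG.1 hab
    · ext l
      simp

theorem sum_strictMono_succ {M : Type*} [AddCommMonoid M] (m s : ℕ)
    (W : (Fin (m + 1) → Fin (s + 1)) → M) :
    ∑ g ∈ univ.filter (StrictMono : (Fin (m + 1) → Fin (s + 1)) → Prop), W g
      = ∑ g ∈ univ.filter (StrictMono : (Fin m → Fin s) → Prop),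
          W (Fin.snoc (Fin.castSucc ∘ g) (Fin.last s))
        + ∑ g ∈ univ.filter (StrictMono : (Fin (m + 1) → Fin s) → Prop),
            W (Fin.castSucc ∘ g) := by
  rw [← sum_filter_add_sum_filter_not _ (fun g => g (Fin.last m) = Fin.last s),
    sum_strictMono_of_last_eq, sum_strictMono_of_last_ne]

section Dickson

variable (K : Type*) {R : Type*} [Fintype K] [CommRing R]

local notation "q" => Fintype.card K

/-- The number `m` of factors (`s - t` in `c_{s,t}`) is a separate parameter: splitting off the
last factor lowers `m` and `s` but keeps `t`. -/
noncomputable def dicksonSum (f : ℕ → R) (m s t : ℕ) : R :=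
  ∑ g ∈ univ.filter (StrictMono : (Fin m → Fin s) → Prop),
    ∏ l, f (g l + 1) ^ ((q - 1) * q ^ (t + l - g l))

noncomputable def dicksonCoeff (f : ℕ → R) (s t : ℕ) : R := dicksonSum K f (s - t) s t

variable {K} (f : ℕ → R)

theorem dicksonSum_zero_left (s t : ℕ) : dicksonSum K f 0 s t = 1 := by
  have : StrictMono (Fin.elim0 : Fin 0 → Fin s) := fun a => a.elim0
  simp [dicksonSum, Subsingleton.elim _ (Fin.elim0 : Fin 0 → Fin s), this]

theorem dicksonSum_of_lt {m s : ℕ} (h : s < m) (t : ℕ) : dicksonSum K f m s t = 0 := by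
  refine sum_eq_zero fun g hg => absurd (Fintype.card_le_of_injective g ?_) (by simpa using h)
  exact (mem_filter.1 hg).2.injective

theorem dicksonSum_succ_succ (m s t : ℕ) :
    dicksonSum K f (m + 1) (s + 1) t
      = dicksonSum K f (m + 1) s t
        + f (s + 1) ^ ((q - 1) * q ^ (t + m - s)) * dicksonSum K f m s t := by
  simp only [dicksonSum]
  rw [sum_strictMono_succ, add_comm, mul_sum]
  congr 1
  refine sum_congr rfl fun g _ => ?_
  simp [Fin.prod_univ_castSucc, mul_comm]

theorem dicksonSum_succ_right [Field K] [Algebra K R] {m s t : ℕ} (h : s ≤ t + m) :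
    dicksonSum K f m s (t + 1) = dicksonSum K f m s t ^ q := by
  rw [dicksonSum, dicksonSum, ← pow_one q, FiniteField.sum_pow_card_pow K, pow_one]
  refine sum_congr rfl fun g hg => ?_
  rw [← prod_pow]
  refine prod_congr rfl fun l _ => ?_
  -- `g l ≤ t + l`, so the exponent `t + l - g l` is not truncated
  have hgl := (mem_filter.1 hg).2.fin_val_add_le l
  rw [← pow_mul, mul_assoc, ← pow_succ, show t + 1 + l - g l = t + l - g l + 1 by omega]

theorem dicksonCoeff_self (s : ℕ) : dicksonCoeff K f s s = 1 := by
  rw [dicksonCoeff, Nat.sub_self, dicksonSum_zero_left]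

theorem dicksonCoeff_succ_zero (s : ℕ) :
    dicksonCoeff K f (s + 1) 0 = f (s + 1) ^ (q - 1) * dicksonCoeff K f s 0 := by
  simp only [dicksonCoeff, Nat.sub_zero]
  rw [dicksonSum_succ_succ, dicksonSum_of_lt f (Nat.lt_succ_self s), zero_add, zero_add,
    Nat.sub_self, pow_zero, mul_one]

theorem dicksonCoeff_succ_succ [Field K] [Algebra K R] {s t : ℕ} (h : t < s) :
    dicksonCoeff K f (s + 1) (t + 1)
      = dicksonCoeff K f s t ^ q + f (s + 1) ^ (q - 1) * dicksonCoeff K f s (t + 1) := by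
  obtain ⟨m, hm⟩ : ∃ m, s - t = m + 1 := ⟨s - t - 1, by omega⟩
  simp only [dicksonCoeff, Nat.add_sub_add_right, hm, show s - (t + 1) = m by omega]
  rw [dicksonSum_succ_succ, dicksonSum_succ_right f (by omega), show t + 1 + m - s = 0 by omega,
    pow_zero, mul_one]

end Dickson

section Expansion

variable (K : Type*) {R : Type*} [Field K] [Fintype K] [CommRing R] [Algebra K R]

local notation "q" => Fintype.card K

noncomputable def dicksonExpansion (f : ℕ → R) (s : ℕ) (z : R) : R :=
  ∑ t ∈ range (s + 1), (-1) ^ (s + t) * dicksonCoeff K f s t * z ^ q ^ t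

variable {K} (f : ℕ → R)

theorem dicksonExpansion_add_smul (s : ℕ) (z : R) (β : K) (w : R) :
    dicksonExpansion K f s (z + β • w)
      = dicksonExpansion K f s z + β • dicksonExpansion K f s w := by
  simp only [dicksonExpansion, FiniteField.add_smul_pow_card_pow, mul_add, sum_add_distrib,
    smul_sum, mul_smul_comm]

theorem dicksonExpansion_pow_card (s : ℕ) (z : R) :
    dicksonExpansion K f s z ^ q
      = ∑ t ∈ range (s + 1), (-1) ^ (s + t) * dicksonCoeff K f s t ^ q * z ^ q ^ (t + 1) := by
  rw [dicksonExpansion, ← pow_one q, FiniteField.sum_pow_card_pow K, pow_one]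
  refine sum_congr rfl fun t _ => ?_
  rw [mul_pow, mul_pow, FiniteField.neg_one_pow_pow_card K, ← pow_mul, ← pow_succ]

theorem dicksonExpansion_succ (s : ℕ) (z : R) :
    dicksonExpansion K f (s + 1) z
      = dicksonExpansion K f s z ^ q - f (s + 1) ^ (q - 1) * dicksonExpansion K f s z := by
  have hmid : ∑ t ∈ range s,
        (-1) ^ (s + 1 + (t + 1)) * dicksonCoeff K f (s + 1) (t + 1) * z ^ q ^ (t + 1)
      = ∑ t ∈ range s, (-1) ^ (s + t) * dicksonCoeff K f s t ^ q * z ^ q ^ (t + 1)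
        - ∑ t ∈ range s, f (s + 1) ^ (q - 1)
          * ((-1) ^ (s + (t + 1)) * dicksonCoeff K f s (t + 1) * z ^ q ^ (t + 1)) := by
    rw [← sum_sub_distrib]
    refine sum_congr rfl fun t ht => ?_
    rw [dicksonCoeff_succ_succ _ (mem_range.1 ht)]
    ring
  rw [dicksonExpansion_pow_card, dicksonExpansion, dicksonExpansion, mul_sum, sum_range_succ _ s,
    sum_range_succ' _ s, sum_range_succ' _ (s + 1), sum_range_succ _ s, hmid, dicksonCoeff_self,
    dicksonCoeff_self, dicksonCoeff_succ_zero]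
  ring

end Expansion

section SubspacePoly

variable (K : Type*) {R : Type*} [Field K] [Fintype K] [CommRing R] [Algebra K R]

noncomputable def subspacePoly (v : ℕ → R) (s : ℕ) (z : R) : R :=
  ∏ α : Fin s → K, (z + ∑ j, α j • v j)

noncomputable def orbitProd (v : ℕ → R) (i : ℕ) : R := subspacePoly K v (i - 1) (v (i - 1))

variable {K} (v : ℕ → R)

theorem subspacePoly_zero (z : R) : subspacePoly K v 0 z = z := by
  simp [subspacePoly]

theorem subspacePoly_succ (s : ℕ) (z : R) :
    subspacePoly K v (s + 1) z = ∏ β : K, subspacePoly K v s (z + β • v s) := by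
  rw [subspacePoly, ← (Fin.snocEquiv fun _ => K).prod_comp, Fintype.prod_prod_type]
  refine prod_congr rfl fun β _ => prod_congr rfl fun α _ => ?_
  simp only [Fin.snocEquiv, Equiv.coe_fn_mk, Fin.sum_univ_castSucc, Fin.snoc_castSucc,
    Fin.snoc_last, Fin.val_castSucc, Fin.val_last]
  ring

theorem subspacePoly_apply_eq_zero {s j : ℕ} (hj : j < s) : subspacePoly K v s (v j) = 0 :=
  prod_eq_zero (mem_univ (Pi.single ⟨j, hj⟩ (-1))) (by simp [Pi.single_apply])

theorem subspacePoly_eq_dicksonExpansion (s : ℕ) :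
    subspacePoly K v s = dicksonExpansion K (orbitProd K v) s := by
  induction s with
  | zero => funext z; simp [subspacePoly_zero, dicksonExpansion, dicksonCoeff_self]
  | succ s ih =>
    funext z
    have hf : orbitProd K v (s + 1) = dicksonExpansion K (orbitProd K v) s (v s) := by
      rw [orbitProd, Nat.add_sub_cancel, ih]
    simp only [subspacePoly_succ, ih, dicksonExpansion_add_smul, ← hf, FiniteField.prod_add_smul,
      dicksonExpansion_succ]

end SubspacePoly

theorem sum_sum_mul_sum_eq_sum_mul {ι R : Type*} [CommSemiring R] (M N : Finset ℕ)
    (s : Finset ι) (a b : ℕ → R) (x y : ι → ℕ → R) :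
    ∑ i ∈ M, ∑ j ∈ N, a i * b j * ∑ l ∈ s, x l i * y l j
      = ∑ l ∈ s, (∑ i ∈ M, a i * x l i) * ∑ j ∈ N, b j * y l j := by
  simp only [mul_sum, sum_mul]
  rw [sum_comm_cycle]
  refine sum_congr rfl fun l _ => ?_
  rw [sum_comm]
  exact sum_congr rfl fun j _ => sum_congr rfl fun i _ => by ring

section Specialization

variable (R : Type*) [CommSemiring R]

noncomputable def xVar (j : ℕ) : MvPolynomial (Fin n ⊕ Fin n) R :=
  if h : j < n then X (Sum.inl ⟨j, h⟩) else 0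

/-- `f*_i` is the orbit product of `y_{n+1-i}`, so the `y`-variables are enumerated backwards. -/
noncomputable def yVar (j : ℕ) : MvPolynomial (Fin n ⊕ Fin n) R :=
  if h : j < n then X (Sum.inr ⟨n - 1 - j, by omega⟩) else 0

variable {F R n}

theorem xVar_of_lt {j : ℕ} (h : j < n) : xVar n R j = X (Sum.inl ⟨j, h⟩) := dif_pos h

theorem yVar_of_lt {j : ℕ} (h : j < n) : yVar n R j = X (Sum.inr ⟨n - 1 - j, by omega⟩) :=
  dif_pos h

theorem fX_eq_orbitProd {k : ℕ} (hk1 : 1 ≤ k) (hk2 : k ≤ n) :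
    fX F n k = orbitProd F (xVar n F) k := by
  rw [fX, dif_pos ⟨hk1, hk2⟩, orbitProd, subspacePoly]
  refine prod_congr rfl fun α _ => ?_
  rw [xVar_of_lt (by omega)]
  exact congrArg _ <| sum_congr rfl fun j _ => by rw [xVar_of_lt (by omega), C_mul']

theorem fY_eq_orbitProd {k : ℕ} (hk1 : 1 ≤ k) (hk2 : k ≤ n) :
    fY F n k = orbitProd F (yVar n F) k := by
  rw [fY, dif_pos ⟨hk1, hk2⟩, orbitProd, subspacePoly]
  refine prod_congr rfl fun α _ => ?_
  rw [yVar_of_lt (by omega)]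
  simp only [show n - 1 - (k - 1) = n - k by omega]
  exact congrArg _ <| sum_congr rfl fun j _ => by rw [yVar_of_lt (by omega), C_mul']

theorem cX_eq_dicksonCoeff {s : ℕ} (hs : s ≤ n) (t : ℕ) :
    cX F n s t = dicksonCoeff F (orbitProd F (xVar n F)) s t := by
  rw [cX, if_pos hs, dicksonCoeff, dicksonSum]
  refine sum_congr (by rfl) fun g _ => prod_congr rfl fun l _ => ?_
  rw [fX_eq_orbitProd (by omega) (by omega)]

theorem cY_eq_dicksonCoeff {s : ℕ} (hs : s ≤ n) (t : ℕ) :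
    cY F n s t = dicksonCoeff F (orbitProd F (yVar n F)) s t := by
  rw [cY, if_pos hs, dicksonCoeff, dicksonSum]
  refine sum_congr (by rfl) fun g _ => prod_congr rfl fun l _ => ?_
  rw [fY_eq_orbitProd (by omega) (by omega)]

theorem X_inl_eq_xVar (l : Fin n) :
    (X (Sum.inl l) : MvPolynomial (Fin n ⊕ Fin n) R) = xVar n R l :=
  (xVar_of_lt l.isLt).symm

theorem X_inr_eq_yVar (l : Fin n) :
    (X (Sum.inr l) : MvPolynomial (Fin n ⊕ Fin n) R) = yVar n R (n - 1 - l) := by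
  rw [yVar_of_lt (by omega)]
  exact congrArg (X ∘ Sum.inr) (Fin.ext (by simp; omega))

theorem uInv_pow_card_pow_min (i j : ℕ) :
    uInv F n ((i : ℤ) - j) ^ Fintype.card F ^ min i j
      = ∑ l : Fin n, X (Sum.inl l) ^ Fintype.card F ^ i * X (Sum.inr l) ^ Fintype.card F ^ j := by
  rcases le_or_gt j i with h | h
  · rw [uInv, if_pos (by omega), min_eq_right h, FiniteField.sum_pow_card_pow F]
    refine sum_congr rfl fun l _ => ?_
    rw [mul_pow, ← pow_mul, ← pow_add, show ((i : ℤ) - j).toNat + j = i by omega]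
  · rw [uInv, if_neg (by omega), min_eq_left h.le, FiniteField.sum_pow_card_pow F]
    refine sum_congr rfl fun l _ => ?_
    rw [mul_pow, ← pow_mul (X _), ← pow_add, show (-((i : ℤ) - j)).toNat + i = j by omega]

theorem sum_subspacePoly_mul_eq_fX_mul_fY {s : ℕ} (hs : s < n) :
    ∑ l : Fin n, subspacePoly F (xVar n F) s (X (Sum.inl l))
        * subspacePoly F (yVar n F) (n - (s + 1)) (X (Sum.inr l))
      = fX F n (s + 1) * fY F n (n - (s + 1) + 1) := by
  rw [sum_eq_single ⟨s, hs⟩ (fun l _ hl => ?_) (by simp), X_inl_eq_xVar, X_inr_eq_yVar,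
    fX_eq_orbitProd (by omega) (by omega), fY_eq_orbitProd (by omega) (by omega), orbitProd,
    orbitProd, Nat.add_sub_cancel, Nat.add_sub_cancel, show n - 1 - s = n - (s + 1) by omega]
  rcases lt_or_gt_of_ne (fun h : (l : ℕ) = s => hl (Fin.ext h)) with h | h
  · rw [X_inl_eq_xVar, subspacePoly_apply_eq_zero _ h, zero_mul]
  · rw [X_inr_eq_yVar, subspacePoly_apply_eq_zero _ (by omega), mul_zero]

end Specialization

/-- Relation `R_k`. -/
theorem relation_Rk (k : ℕ) (hk1 : 1 ≤ k) (hk2 : k ≤ n) :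
    ∑ i ∈ Finset.range k, ∑ j ∈ Finset.range (n - k + 1),
      (-1 : MvPolynomial (Fin n ⊕ Fin n) F) ^ (i + j + n + 1) *
        cX F n (k - 1) i * cY F n (n - k) j *
        uInv F n ((i : ℤ) - (j : ℤ)) ^ (Fintype.card F ^ min i j)
    = fX F n k * fY F n (n + 1 - k) := by
  obtain ⟨s, rfl⟩ : ∃ s, k = s + 1 := ⟨k - 1, by omega⟩
  calc _ = ∑ i ∈ range (s + 1), ∑ j ∈ range (n - (s + 1) + 1),
          ((-1) ^ (s + i) * dicksonCoeff F (orbitProd F (xVar n F)) s i)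
            * ((-1) ^ (n - (s + 1) + j) * dicksonCoeff F (orbitProd F (yVar n F)) (n - (s + 1)) j)
            * ∑ l : Fin n,
                X (Sum.inl l) ^ Fintype.card F ^ i * X (Sum.inr l) ^ Fintype.card F ^ j := by
        refine sum_congr rfl fun i _ => sum_congr rfl fun j _ => ?_
        rw [Nat.add_sub_cancel, cX_eq_dicksonCoeff (by omega), cY_eq_dicksonCoeff (by omega),
          uInv_pow_card_pow_min, show i + j + n + 1 = s + i + (n - (s + 1) + j) + 2 by omega]
        ring
    _ = ∑ l : Fin n, subspacePoly F (xVar n F) s (X (Sum.inl l))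
          * subspacePoly F (yVar n F) (n - (s + 1)) (X (Sum.inr l)) := by
        simp only [sum_sum_mul_sum_eq_sum_mul, subspacePoly_eq_dicksonExpansion, dicksonExpansion]
    _ = fX F n (s + 1) * fY F n (n + 1 - (s + 1)) := by
        rw [sum_subspacePoly_mul_eq_fX_mul_fY (by omega),
          show n + 1 - (s + 1) = n - (s + 1) + 1 by omega]
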